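/- arXiv:2101.07833 — 2 statements merged into one kernel-verified Lean document; each statement's English description precedes it below -/
import Mathlib

section
/- Combining the geometric decay ρ_j ≤ ρ_max ν_W^{j-1} with the GD movement bound ‖L_j^ℓ − L_j^0‖_F ≤ B_2 ρ_j η ℓ and the initialization size E‖L_j^0‖²_F = n_x n_y ν_C ν_F ν_W^j, the impulse response coefficients of a trained wide linear RNN satisfy ‖L_j^ℓ‖_F = O(ν_W^{j/2} + ℓ ν_W^{j-1}) with constants independent of j and ℓ. Hence for 0 < ν_W < 1 and any fixed number of training steps ℓ, the influence of inputs at lag j on the output decays geometrically in j. -/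
attribute [local instance] Matrix.frobeniusNormedAddCommGroup

/-- Combining geometric decay of the scale factors
`ρ_j ≤ ρ_max ν_W^{j-1}`, the GD movement bound `‖L_j^ℓ − L_j^0‖ ≤ B_2 ρ_j η ℓ`, and
the initialization size `E‖L_j^0‖² = n_x n_y ν_C ν_F ν_W^j` (stated here as an
exact identity on the norms in the infinite-width limit), the impulse response
coefficients satisfy `‖L_j^ℓ‖ = O(ν_W^{j/2} + ℓ ν_W^{j-1})` with a constant
independent of `j` and `ℓ`: geometric decay of the influence of lag-`j` inputs. -/
theorem implicit_bias_combined (nx ny : ℕ)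
    (νW νC νF ρmax B2 η : ℝ)
    (hνW0 : 0 < νW) (hνW1 : νW < 1) (hνC : 0 < νC) (hνF : 0 < νF)
    (hρm : 0 ≤ ρmax) (hB2 : 0 ≤ B2) (hη : 0 ≤ η)
    (ρ : ℕ → ℝ) (hρ : ∀ j, 0 ≤ ρ j) (hρdecay : ∀ j, ρ j ≤ ρmax * νW ^ (j - 1))
    (L : ℕ → ℕ → Matrix (Fin ny) (Fin nx) ℝ)
    (hinit : ∀ j, ‖L 0 j‖ ^ 2 = nx * ny * νC * νF * νW ^ j)
    (hmove : ∀ (ℓ j : ℕ), ‖L ℓ j - L 0 j‖ ≤ B2 * ρ j * η * ℓ) :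
    ∃ C : ℝ, 0 ≤ C ∧ ∀ (ℓ j : ℕ),
      ‖L ℓ j‖ ≤ C * (Real.sqrt (νW ^ j) + ℓ * νW ^ (j - 1)) := by
  set A : ℝ := Real.sqrt (nx * ny * νC * νF) with hA
  refine ⟨max A (B2 * ρmax * η), le_max_of_le_left (Real.sqrt_nonneg _), ?_⟩
  intro ℓ j
  have hLnn : (0:ℝ) ≤ ‖L 0 j‖ := norm_nonneg _
  have hL0 : ‖L 0 j‖ = A * Real.sqrt (νW ^ j) := by
    have := hinit j
    have h1 : ‖L 0 j‖ = Real.sqrt (nx * ny * νC * νF * νW ^ j) := by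
      rw [← this, Real.sqrt_sq hLnn]
    rw [h1, Real.sqrt_mul]
    positivity
  have hmv : ‖L ℓ j - L 0 j‖ ≤ (B2 * ρmax * η) * (ℓ * νW ^ (j - 1)) := by
    calc ‖L ℓ j - L 0 j‖ ≤ B2 * ρ j * η * ℓ := hmove ℓ j
      _ ≤ B2 * (ρmax * νW ^ (j - 1)) * η * ℓ := by
          have h := hρdecay j
          have hℓ : (0:ℝ) ≤ (ℓ:ℝ) := Nat.cast_nonneg _
          have := mul_nonneg (mul_nonneg hB2 hη) hℓ
          nlinarith [mul_nonneg (mul_nonneg (mul_nonneg hB2 hη) hℓ) (sub_nonneg.mpr h)]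
      _ = (B2 * ρmax * η) * (ℓ * νW ^ (j - 1)) := by ring
  have htri : ‖L ℓ j‖ ≤ ‖L 0 j‖ + ‖L ℓ j - L 0 j‖ := by
    have := norm_add_le (L 0 j) (L ℓ j - L 0 j)
    simpa using this
  have h1 : ‖L 0 j‖ ≤ max A (B2 * ρmax * η) * Real.sqrt (νW ^ j) := by
    rw [hL0]
    exact mul_le_mul_of_nonneg_right (le_max_left _ _) (Real.sqrt_nonneg _)
  have h2 : ‖L ℓ j - L 0 j‖ ≤ max A (B2 * ρmax * η) * (ℓ * νW ^ (j - 1)) := by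
    refine hmv.trans (mul_le_mul_of_nonneg_right (le_max_right _ _) ?_)
    positivity
  calc ‖L ℓ j‖ ≤ ‖L 0 j‖ + ‖L ℓ j - L 0 j‖ := htri
    _ ≤ max A (B2 * ρmax * η) * Real.sqrt (νW ^ j)
        + max A (B2 * ρmax * η) * (ℓ * νW ^ (j - 1)) := add_le_add h1 h2
    _ = max A (B2 * ρmax * η) * (Real.sqrt (νW ^ j) + ℓ * νW ^ (j - 1)) := by ring
end

section
/- Let Σ_1, Σ_2 be positive semidefinite d×d matrices. Then tr(Σ_1 − 2(Σ_1^{1/2} Σ_2 Σ_1^{1/2})^{1/2} + Σ_2) ≥ 0, with equality if and only if Σ_1 = Σ_2. -/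
open Matrix

open scoped ComplexOrder in
/-- The positive semidefinite square root, as defined in the older Mathlib
(`Matrix.PosSemidef.sqrt`, since removed). -/
noncomputable def Matrix.PosSemidef.sqrt {n : Type*} [Fintype n] [DecidableEq n]
    {𝕜 : Type*} [RCLike 𝕜] {A : Matrix n n 𝕜} (hA : A.PosSemidef) : Matrix n n 𝕜 :=
  hA.1.eigenvectorUnitary.1 * diagonal ((↑) ∘ (√·) ∘ hA.1.eigenvalues) *
    (star hA.1.eigenvectorUnitary : Matrix n n 𝕜)

namespace Matrix.PosSemidef

lemma posSemidef_sqrt {n : Type*} [Fintype n] [DecidableEq n] {A : Matrix n n ℝ}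
    (hA : A.PosSemidef) : hA.sqrt.PosSemidef := by
  have hd : (diagonal ((RCLike.ofReal ∘ (√·) ∘ hA.1.eigenvalues) : n → ℝ)).PosSemidef :=
    Matrix.posSemidef_diagonal_iff.mpr fun i => by simp [Real.sqrt_nonneg]
  have := hd.mul_mul_conjTranspose_same (hA.1.eigenvectorUnitary : Matrix n n ℝ)
  unfold Matrix.PosSemidef.sqrt
  rw [Matrix.star_eq_conjTranspose]
  exact this

lemma sqrt_mul_self {n : Type*} [Fintype n] [DecidableEq n] {A : Matrix n n ℝ}
    (hA : A.PosSemidef) : hA.sqrt * hA.sqrt = A := by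
  conv_rhs => rw [hA.1.spectral_theorem, Unitary.conjStarAlgAut_apply]
  unfold Matrix.PosSemidef.sqrt
  have hV1 : (star hA.1.eigenvectorUnitary : Matrix n n ℝ) * hA.1.eigenvectorUnitary.1 = 1 :=
    Unitary.coe_star_mul_self hA.1.eigenvectorUnitary
  have step : ∀ (U D E Us : Matrix n n ℝ), U * D * Us * (U * E * Us) = U * (D * (Us * U) * E) * Us :=
    fun U D E Us => by simp only [Matrix.mul_assoc]
  rw [step, hV1, mul_one, Matrix.diagonal_mul_diagonal]
  congr 3
  funext i
  simp [Real.mul_self_sqrt (hA.eigenvalues_nonneg i)]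

open scoped MatrixOrder Matrix.Norms.L2Operator in
lemma eq_of_sq_eq_sq {n : Type*} [Fintype n] [DecidableEq n] {A B : Matrix n n ℝ}
    (hA : A.PosSemidef) (hB : B.PosSemidef) (h : A ^ 2 = B ^ 2) : A = B :=
  (CFC.sq_eq_sq_iff A B hA.nonneg hB.nonneg).mp h

end Matrix.PosSemidef


section helpers
variable {d : ℕ}

private lemma psd_trace_nonneg {M : Matrix (Fin d) (Fin d) ℝ} (hM : M.PosSemidef) :
    0 ≤ M.trace := by
  rw [Matrix.trace]
  refine Finset.sum_nonneg fun i _ => ?_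
  exact hM.diag_nonneg

private lemma psd_trace_zero {M : Matrix (Fin d) (Fin d) ℝ} (hM : M.PosSemidef)
    (h : M.trace = 0) : M = 0 := by
  set s := hM.sqrt with hs
  have hss : s * s = M := hM.sqrt_mul_self
  have hsh : sᴴ = s := hM.posSemidef_sqrt.1
  have hs0 : s = 0 := by
    have ht : ∑ j, ∑ i, s i j * s i j = 0 := by
      have : (sᴴ * s).trace = 0 := by rw [hsh, hss, h]
      simpa [Matrix.trace, Matrix.mul_apply, Matrix.diag, Matrix.conjTranspose_apply] using this
    ext i j
    have h1 : ∀ j ∈ Finset.univ, (0:ℝ) ≤ ∑ i, s i j * s i j := fun j _ =>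
      Finset.sum_nonneg fun i _ => mul_self_nonneg _
    have h2 := (Finset.sum_eq_zero_iff_of_nonneg h1).mp ht j (Finset.mem_univ j)
    have h3 := (Finset.sum_eq_zero_iff_of_nonneg
      (fun i _ => mul_self_nonneg (s i j))).mp h2 i (Finset.mem_univ i)
    simpa using mul_self_eq_zero.mp h3
  rw [← hss, hs0, zero_mul]

variable (V : Matrix (Fin d) (Fin d) ℝ) (μ : Fin d → ℝ)

private noncomputable def gg (f : ℝ → ℝ) : Matrix (Fin d) (Fin d) ℝ :=
  V * Matrix.diagonal (f ∘ μ) * star V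

private lemma gg_mul (hV1 : star V * V = 1) (f f' : ℝ → ℝ) :
    gg V μ f * gg V μ f' = gg V μ (fun t => f t * f' t) := by
  unfold gg
  have step : V * Matrix.diagonal (f ∘ μ) * star V * (V * Matrix.diagonal (f' ∘ μ) * star V)
      = V * (Matrix.diagonal (f ∘ μ) * (star V * V) * Matrix.diagonal (f' ∘ μ)) * star V := by
    simp only [Matrix.mul_assoc]
  rw [step, hV1, mul_one, Matrix.diagonal_mul_diagonal]
  rfl

private lemma gg_one (hV2 : V * star V = 1) : gg V μ (fun _ => 1) = 1 := by
  unfold gg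
  have : Matrix.diagonal ((fun (_:ℝ) => (1:ℝ)) ∘ μ) = 1 := by
    rw [show ((fun (_:ℝ) => (1:ℝ)) ∘ μ) = fun _ => 1 from rfl, Matrix.diagonal_one]
  rw [this, mul_one, hV2]

private lemma gg_zero : gg V μ (fun _ => 0) = 0 := by
  unfold gg
  have : Matrix.diagonal ((fun (_:ℝ) => (0:ℝ)) ∘ μ) = 0 := by
    rw [show ((fun (_:ℝ) => (0:ℝ)) ∘ μ) = fun _ => 0 from rfl, Matrix.diagonal_zero]
  rw [this, mul_zero, zero_mul]

private lemma gg_psd {f : ℝ → ℝ} (hf : ∀ t, 0 ≤ f t) : (gg V μ f).PosSemidef := by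
  have hd : (Matrix.diagonal (f ∘ μ)).PosSemidef :=
    Matrix.posSemidef_diagonal_iff.mpr fun i => hf _
  have := hd.mul_mul_conjTranspose_same V
  simpa [gg, Matrix.star_eq_conjTranspose] using this

private lemma gg_congr {f f' : ℝ → ℝ} (h : ∀ t, f t = f' t) : gg V μ f = gg V μ f' := by
  have : f ∘ μ = f' ∘ μ := funext fun i => h (μ i)
  unfold gg
  rw [this]

private lemma gg_sub (f f' : ℝ → ℝ) :
    gg V μ (fun t => f t - f' t) = gg V μ f - gg V μ f' := by
  unfold gg
  have h0 : ((fun t => f t - f' t) ∘ μ) = (fun i => f (μ i) - f' (μ i)) := rfl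
  rw [h0, ← Matrix.diagonal_sub, Matrix.mul_sub, Matrix.sub_mul]
  rfl

end helpers

set_option maxHeartbeats 1000000 in
/-- For positive semidefinite `Σ_1, Σ_2`, the Givens–Shortt quantity
`tr(Σ_1 − 2(Σ_1^{1/2} Σ_2 Σ_1^{1/2})^{1/2} + Σ_2)` (the squared Wasserstein-2
distance between `N(0,Σ_1)` and `N(0,Σ_2)`) is nonnegative, and it vanishes if and
only if `Σ_1 = Σ_2`. Here `R` is the (unique) positive semidefinite square root of
`Σ_1^{1/2} Σ_2 Σ_1^{1/2}`. -/
theorem gaussian_wasserstein_nonneg (d : ℕ)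
    (S1 S2 : Matrix (Fin d) (Fin d) ℝ)
    (h1 : S1.PosSemidef) (h2 : S2.PosSemidef)
    (R : Matrix (Fin d) (Fin d) ℝ)
    (hRpsd : R.PosSemidef) (hRsq : R * R = h1.sqrt * S2 * h1.sqrt) :
    0 ≤ S1.trace - 2 * R.trace + S2.trace ∧
      (S1.trace - 2 * R.trace + S2.trace = 0 ↔ S1 = S2) := by
  classical
  set A := h1.sqrt with hAdef
  have hA : A.PosSemidef := h1.posSemidef_sqrt
  have hAA : A * A = S1 := h1.sqrt_mul_self
  set V : Matrix (Fin d) (Fin d) ℝ := (hA.1.eigenvectorUnitary : Matrix (Fin d) (Fin d) ℝ)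
    with hVdef
  set μ : Fin d → ℝ := hA.1.eigenvalues with hμdef
  have hV1 : star V * V = 1 := Unitary.coe_star_mul_self hA.1.eigenvectorUnitary
  have hV2 : V * star V = 1 := Unitary.coe_mul_star_self hA.1.eigenvectorUnitary
  have hAg : A = gg V μ (fun t => t) := by
    have hdiag : (RCLike.ofReal ∘ μ : Fin d → ℝ) = ((fun t => t) ∘ μ) := by
      ext i; simp
    rw [hA.1.spectral_theorem, Unitary.conjStarAlgAut_apply]
    unfold gg
    rw [hdiag]
  set fsq : ℝ → ℝ := fun t => t * t with hfsq
  set finv : ℝ → ℝ := fun t => (t * t)⁻¹ with hfinv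
  set fe : ℝ → ℝ := fun t => (t * t)⁻¹ * (t * t) with hfe
  set fy : ℝ → ℝ := fun t => |t|⁻¹ with hfy
  set W := gg V μ finv with hWdef
  set P := gg V μ fe with hPdef
  set Y := gg V μ fy with hYdef
  set Q := gg V μ (fun t => 1 - fe t) with hQdef
  have hZg : S1 = gg V μ fsq := by
    rw [← hAA, hAg, gg_mul V μ hV1]
  have hQ1P : Q = 1 - P := by
    rw [hQdef, gg_sub V μ (fun _ => 1) fe, gg_one V μ hV2, hPdef]
  -- pointwise facts
  have hfe01 : ∀ t : ℝ, fe t = 0 ∨ fe t = 1 := by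
    intro t
    rcases eq_or_ne t 0 with h | h
    · left; simp [hfe, h]
    · right
      simp only [hfe]
      exact inv_mul_cancel₀ (mul_ne_zero h h)
  have hfe_nonneg : ∀ t : ℝ, 0 ≤ fe t := fun t => by
    rcases hfe01 t with h | h <;> rw [h] <;> norm_num
  have hfq_nonneg : ∀ t : ℝ, 0 ≤ 1 - fe t := fun t => by
    rcases hfe01 t with h | h <;> rw [h] <;> norm_num
  have hfinv_nonneg : ∀ t : ℝ, 0 ≤ finv t := fun t =>
    inv_nonneg.mpr (mul_self_nonneg t)
  have hfy_nonneg : ∀ t : ℝ, 0 ≤ fy t := fun t => inv_nonneg.mpr (abs_nonneg t)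
  -- matrix identities
  have hYY : Y * Y = W := by
    rw [hYdef, gg_mul V μ hV1, hWdef]
    exact gg_congr V μ fun t => by
      simp only [hfy, hfinv, ← mul_inv, abs_mul_abs_self]
  have hWZ : W * S1 = P := by
    rw [hZg, hWdef, gg_mul V μ hV1, hPdef]
  have hZW : S1 * W = P := by
    rw [hZg, hWdef, gg_mul V μ hV1, hPdef]
    exact gg_congr V μ fun t => by rw [mul_comm]
  have hPZ : P * S1 = S1 := by
    rw [hZg, hPdef, gg_mul V μ hV1]
    refine gg_congr V μ fun t => ?_
    rcases eq_or_ne t 0 with h | h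
    · simp [hfe, hfsq, h]
    · simp only [hfe, hfsq]
      rw [inv_mul_cancel₀ (mul_ne_zero h h), one_mul]
  have hAWA : A * W * A = P := by
    rw [hAg, hWdef, gg_mul V μ hV1, gg_mul V μ hV1, hPdef]
    refine gg_congr V μ fun t => ?_
    rcases eq_or_ne t 0 with h | h
    · simp [hfe, hfinv, h]
    · simp only [hfe, hfinv]
      field_simp
  have hAQ : A * Q = 0 := by
    rw [hAg, hQdef, gg_mul V μ hV1]
    refine (gg_congr V μ fun t => ?_).trans (gg_zero V μ)
    rcases eq_or_ne t 0 with h | h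
    · simp [hfe, h]
    · simp only [hfe]
      rw [inv_mul_cancel₀ (mul_ne_zero h h)]
      ring
  have hQA : Q * A = 0 := by
    rw [hAg, hQdef, gg_mul V μ hV1]
    refine (gg_congr V μ fun t => ?_).trans (gg_zero V μ)
    rcases eq_or_ne t 0 with h | h
    · simp [hfe, h]
    · simp only [hfe]
      rw [inv_mul_cancel₀ (mul_ne_zero h h)]
      ring
  have hQQ : Q * Q = Q := by
    rw [hQdef, gg_mul V μ hV1]
    refine gg_congr V μ fun t => ?_
    rcases hfe01 t with h | h <;> rw [h] <;> ring
  have hWpsd : W.PosSemidef := gg_psd V μ hfinv_nonneg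
  have hPpsd : P.PosSemidef := gg_psd V μ hfe_nonneg
  have hQpsd : Q.PosSemidef := gg_psd V μ hfq_nonneg
  have hYpsd : Y.PosSemidef := gg_psd V μ hfy_nonneg
  -- R * Q = 0, hence R * P = R and P * R = R
  have hRQ : R * Q = 0 := by
    have key : (R * Q)ᴴ * (R * Q) = 0 := by
      have e1 : (R * Q)ᴴ = Q * R := by
        rw [Matrix.conjTranspose_mul, hQpsd.1, hRpsd.1]
      rw [e1, show Q * R * (R * Q) = Q * (R * R) * Q by
        simp only [Matrix.mul_assoc], hRsq]
      rw [show Q * (A * S2 * A) * Q = (Q * A) * S2 * (A * Q) by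
        simp only [Matrix.mul_assoc], hQA, hAQ, Matrix.zero_mul, Matrix.mul_zero]
    exact Matrix.conjTranspose_mul_self_eq_zero.mp key
  have hRP : R * P = R := by
    have h' : R * (1 - P) = 0 := by rw [← hQ1P]; exact hRQ
    rw [Matrix.mul_sub, Matrix.mul_one] at h'
    exact (sub_eq_zero.mp h').symm
  have hPR : P * R = R := by
    have h' : (R * P)ᴴ = P * R := by rw [Matrix.conjTranspose_mul, hPpsd.1, hRpsd.1]
    rw [← h', hRP, hRpsd.1]
  -- trace computation
  have t1 : (R * W * R).trace = (S2 * P).trace := by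
    calc (R * W * R).trace = (R * R * W).trace := by rw [Matrix.trace_mul_cycle]
      _ = (A * S2 * A * W).trace := by rw [hRsq]
      _ = (S2 * P).trace := by
          rw [show A * S2 * A * W = A * (S2 * (A * W)) by simp only [Matrix.mul_assoc],
            Matrix.trace_mul_comm,
            show S2 * (A * W) * A = S2 * (A * W * A) by simp only [Matrix.mul_assoc], hAWA]
  have t2 : (R * W * S1).trace = R.trace := by
    rw [show R * W * S1 = R * (W * S1) by simp only [Matrix.mul_assoc], hWZ, hRP]
  have t3 : (S1 * W * R).trace = R.trace := by
    rw [hZW, hPR]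
  have t4 : (S1 * W * S1).trace = S1.trace := by
    rw [hZW, hPZ]
  have expand : (R - S1) * W * (R - S1)
      = R * W * R - R * W * S1 - S1 * W * R + S1 * W * S1 := by
    noncomm_ring
  set T1 := ((R - S1) * W * (R - S1)).trace with hT1def
  set T2 := (S2 * Q).trace with hT2def
  have hT1val : T1 = (S2 * P).trace - 2 * R.trace + S1.trace := by
    rw [hT1def, expand, Matrix.trace_add, Matrix.trace_sub, Matrix.trace_sub, t1, t2, t3, t4]
    ring
  have hT2val : T2 = S2.trace - (S2 * P).trace := by
    rw [hT2def, hQ1P, Matrix.mul_sub, Matrix.mul_one, Matrix.trace_sub]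
  have hsum : S1.trace - 2 * R.trace + S2.trace = T1 + T2 := by
    rw [hT1val, hT2val]; ring
  -- nonnegativity
  have hM1psd : ((R - S1) * W * (R - S1)).PosSemidef := by
    have hherm : (R - S1)ᴴ = R - S1 := by
      rw [Matrix.conjTranspose_sub, hRpsd.1, h1.1]
    have := hWpsd.mul_mul_conjTranspose_same (R - S1)
    rwa [hherm] at this
  have hT1nonneg : 0 ≤ T1 := psd_trace_nonneg hM1psd
  set s := h2.sqrt with hsdef
  have hss : s * s = S2 := h2.sqrt_mul_self
  have hsherm : sᴴ = s := h2.posSemidef_sqrt.1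
  have hT2eq : T2 = (s * Q * s).trace := by
    rw [hT2def, ← hss, show s * s * Q = s * (s * Q) by simp only [Matrix.mul_assoc],
      Matrix.trace_mul_comm]
  have hM2psd : (s * Q * s).PosSemidef := by
    have := hQpsd.conjTranspose_mul_mul_same s
    rwa [hsherm] at this
  have hT2nonneg : 0 ≤ T2 := by rw [hT2eq]; exact psd_trace_nonneg hM2psd
  have hnonneg : 0 ≤ S1.trace - 2 * R.trace + S2.trace := by
    rw [hsum]; linarith
  refine ⟨hnonneg, ?_, ?_⟩
  · -- equality ⇒ S1 = S2
    intro heq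
    have hT1z : T1 = 0 := by rw [hsum] at heq; linarith
    have hT2z : T2 = 0 := by rw [hsum] at heq; linarith
    have hM1z : (R - S1) * W * (R - S1) = 0 := psd_trace_zero hM1psd hT1z
    have hYRZ : Y * (R - S1) = 0 := by
      have key : (Y * (R - S1))ᴴ * (Y * (R - S1)) = 0 := by
        have e1 : (Y * (R - S1))ᴴ = (R - S1) * Y := by
          rw [Matrix.conjTranspose_mul, hYpsd.1, Matrix.conjTranspose_sub, hRpsd.1, h1.1]
        rw [e1, show (R - S1) * Y * (Y * (R - S1)) = (R - S1) * (Y * Y) * (R - S1) by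
          simp only [Matrix.mul_assoc], hYY, hM1z]
      exact Matrix.conjTranspose_mul_self_eq_zero.mp key
    have hReqS1 : R = S1 := by
      have hPRZ : P * (R - S1) = 0 := by
        rw [← hZW, show S1 * W * (R - S1) = S1 * (Y * (Y * (R - S1))) by
          rw [← hYY]; simp only [Matrix.mul_assoc], hYRZ, Matrix.mul_zero, Matrix.mul_zero]
      rw [Matrix.mul_sub, hPR, hPZ, sub_eq_zero] at hPRZ
      exact hPRZ
    have hM2z : s * Q * s = 0 := psd_trace_zero hM2psd (by rw [← hT2eq]; exact hT2z)
    have hQs : Q * s = 0 := by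
      have key : (Q * s)ᴴ * (Q * s) = 0 := by
        have e1 : (Q * s)ᴴ = s * Q := by rw [Matrix.conjTranspose_mul, hsherm, hQpsd.1]
        rw [e1, show s * Q * (Q * s) = s * (Q * Q) * s by simp only [Matrix.mul_assoc],
          hQQ, hM2z]
      exact Matrix.conjTranspose_mul_self_eq_zero.mp key
    have hPs : P * s = s := by
      have h' : (1 - P) * s = 0 := by rw [← hQ1P]; exact hQs
      rw [Matrix.sub_mul, Matrix.one_mul] at h'
      exact (sub_eq_zero.mp h').symm
    have hsP : s * P = s := by
      have h' : (P * s)ᴴ = s * P := by rw [Matrix.conjTranspose_mul, hsherm, hPpsd.1]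
      rw [← h', hPs, hsherm]
    have hS2P : P * S2 * P = S2 := by
      rw [← hss, show P * (s * s) * P = (P * s) * (s * P) by simp only [Matrix.mul_assoc],
        hPs, hsP]
    have hZZ : S1 * S1 = A * S2 * A := by rw [← hReqS1]; exact hRsq
    have final : S2 = S1 := by
      calc S2 = P * S2 * P := hS2P.symm
        _ = (A * W * A) * S2 * (A * W * A) := by rw [hAWA]
        _ = (A * W) * (A * S2 * A) * (W * A) := by simp only [Matrix.mul_assoc]
        _ = (A * W) * (S1 * S1) * (W * A) := by rw [hZZ]
        _ = S1 := by
            rw [hAg, hWdef, hZg]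
            simp only [gg_mul V μ hV1]
            refine gg_congr V μ fun t => ?_
            rcases eq_or_ne t 0 with h | h
            · simp [hfinv, hfsq, h]
            · simp only [hfinv, hfsq]
              field_simp
    exact final.symm
  · -- S1 = S2 ⇒ equality
    intro heq
    have hsq : R ^ 2 = S1 ^ 2 := by
      rw [pow_two, pow_two, hRsq, ← heq, ← hAA]
      simp only [Matrix.mul_assoc]
    have hRS1 : R = S1 := hRpsd.eq_of_sq_eq_sq h1 hsq
    rw [hRS1, ← heq]
    ring
end
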